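/- arXiv:2408.12011 — 5 statements merged into one kernel-verified Lean document; each statement's English description precedes it below -/
import Mathlib

section
/- For all real p > 0 and q > 0, the maximum of t^p (1−t)^q over t ∈ [0,1] is at most (p/(e·q))^p. -/
open Real

/-! Since `1 - t ≤ e^{-t}`, the product is at most `t^p e^{-qt} = (t e^{-(q/p) t})^p`, and
`x e^{-x} ≤ e^{-1}` bounds `t e^{-(q/p) t}` by `p / (e q)`. -/

theorem mul_exp_neg_mul_le {c : ℝ} (hc : 0 < c) (t : ℝ) :
    t * exp (-(c * t)) ≤ (exp 1 * c)⁻¹ := by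
  rw [mul_inv, le_mul_inv_iff₀ hc, ← exp_neg, mul_comm, ← mul_assoc]
  exact mul_exp_neg_le_exp_neg_one (c * t)

theorem one_sub_rpow_le_exp_neg_mul {t q : ℝ} (ht : t ≤ 1) (hq : 0 ≤ q) :
    (1 - t) ^ q ≤ exp (-(q * t)) := by
  rw [neg_mul_eq_mul_neg, mul_comm, exp_mul]
  exact rpow_le_rpow (sub_nonneg.2 ht) (one_sub_le_exp_neg t) hq

/-- For `p, q > 0`, the maximum of `t^p (1-t)^q` over `[0,1]` is at most `(p/(e q))^p`. -/
theorem max_rpow_mul_rpow_le (p q : ℝ) (hp : 0 < p) (hq : 0 < q) :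
    ∀ t ∈ Set.Icc (0 : ℝ) 1,
      t ^ p * (1 - t) ^ q ≤ (p / (Real.exp 1 * q)) ^ p := by
  rintro t ⟨ht0, ht1⟩
  have hbase : t * exp (-(q / p * t)) ≤ p / (exp 1 * q) := by
    convert mul_exp_neg_mul_le (div_pos hq hp) t using 1
    field_simp
  calc t ^ p * (1 - t) ^ q ≤ t ^ p * exp (-(q * t)) := by
        gcongr
        exact one_sub_rpow_le_exp_neg_mul ht1 hq.le
    _ = (t * exp (-(q / p * t))) ^ p := by
        rw [mul_rpow ht0 (exp_pos _).le, ← exp_mul]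
        field_simp
    _ ≤ (p / (exp 1 * q)) ^ p := by gcongr
end

section
/- For all real a ≥ 0, b ≥ 0 and θ ∈ ℝ, |a − b·e^{iθ}| ≥ √(a² + b²) · |sin(θ/2)|. -/
open Complex

/-! Expanding the square gives `‖a - b e^{iθ}‖² = (a - b)² + 4ab sin²(θ/2)`, and with `s = sin²(θ/2) ∈ [0, 1]`
this exceeds `(a² + b²) s` by `(1 - s)(a - b)² + 2abs ≥ 0`. -/

theorem norm_ofReal_sub_ofReal_mul_exp_sq (a b θ : ℝ) :
    ‖(a : ℂ) - b * exp (θ * I)‖ ^ 2 = (a - b) ^ 2 + 4 * (a * b) * Real.sin (θ / 2) ^ 2 := by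
  have hcos : Real.cos θ = 1 - 2 * Real.sin (θ / 2) ^ 2 := by
    rw [← Real.cos_two_mul_eq_one_sub, mul_div_cancel₀ θ two_ne_zero]
  rw [Complex.sq_norm, exp_mul_I, ← ofReal_cos, ← ofReal_sin, normSq_apply]
  simp only [sub_re, sub_im, mul_re, mul_im, add_re, add_im, ofReal_re, ofReal_im, I_re, I_im]
  linear_combination b ^ 2 * Real.sin_sq_add_cos_sq θ - 2 * (a * b) * hcos

/-- `|a - b e^{iθ}| ≥ √(a² + b²) |sin (θ/2)|` for `a, b ≥ 0`. -/
theorem abs_sub_mul_exp_ge (a b θ : ℝ) (ha : 0 ≤ a) (hb : 0 ≤ b) :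
    Real.sqrt (a ^ 2 + b ^ 2) * |Real.sin (θ / 2)| ≤
      ‖(a : ℂ) - (b : ℂ) * Complex.exp (θ * Complex.I)‖ := by
  have hs1 : Real.sin (θ / 2) ^ 2 ≤ 1 := Real.sin_sq_le_one _
  have key : (a ^ 2 + b ^ 2) * Real.sin (θ / 2) ^ 2 ≤ ‖(a : ℂ) - b * exp (θ * I)‖ ^ 2 := by
    rw [norm_ofReal_sub_ofReal_mul_exp_sq]
    linarith [mul_nonneg (sub_nonneg.2 hs1) (sq_nonneg (a - b)),
      mul_nonneg (mul_nonneg ha hb) (sq_nonneg (Real.sin (θ / 2)))]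
  calc Real.sqrt (a ^ 2 + b ^ 2) * |Real.sin (θ / 2)|
      = Real.sqrt ((a ^ 2 + b ^ 2) * Real.sin (θ / 2) ^ 2) := by
        rw [Real.sqrt_mul (by positivity), Real.sqrt_sq_eq_abs]
    _ ≤ Real.sqrt (‖(a : ℂ) - b * exp (θ * I)‖ ^ 2) := Real.sqrt_le_sqrt key
    _ = ‖(a : ℂ) - (b : ℂ) * Complex.exp (θ * Complex.I)‖ := Real.sqrt_sq (norm_nonneg _)
end

section
/- Let α > 0, n ∈ ℕ, c ∈ ℝ, and define the operator 𝒟_c on functions f by (𝒟_c f)(z) = z·f'(z) + c·f(z). Let h_c^{(m)}(z) = 𝒟_c^m ((1+z)^{αn}). Then for all m ∈ ℕ₀, h_c^{(m)}(z) = ∑_{k=0}^{m} W_c(m,k) · (αn)_k · z^k · (1+z)^{αn−k}, where (s)_k = s(s−1)⋯(s−k+1) is the falling factorial and W_c(m,k) are the c-Whitney numbers of the second kind defined by W_c(m,0)=c^m, W_c(m,m)=1, W_c(m,k)=(k+c)W_c(m−1,k)+W_c(m−1,k−1). -/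
/-- The `c`-Whitney numbers of the second kind. -/
noncomputable def whitney (c : ℝ) : ℕ → ℕ → ℝ
  | 0, k => if k = 0 then 1 else 0
  | (m + 1), k =>
      if k = 0 then c ^ (m + 1)
      else if k = m + 1 then 1
      else ((k : ℝ) + c) * whitney c m k + whitney c m (k - 1)

/-- The operator `𝒟_c f (z) = z f'(z) + c f(z)`. -/
noncomputable def fracD (c : ℝ) (f : ℝ → ℝ) : ℝ → ℝ :=
  fun z => z * deriv f z + c * f z

/-! Writing `g_k(z) = (s)_k z^k (1+z)^{s-k}`, the Euler operator `z d/dz` sends `g_k` to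
`k g_k + g_{k+1}`, because `(s)_k (s-k) = (s)_{k+1}`. Hence `𝒟_c g_k = (k+c) g_k + g_{k+1}`,
and applying `𝒟_c` to `∑_k W_c(m,k) g_k` yields `∑_k W_c(m+1,k) g_k` by the defining recurrence
of the Whitney numbers. -/

open Finset Set

lemma whitney_eq_zero_of_lt (c : ℝ) {m k : ℕ} (h : m < k) : whitney c m k = 0 := by
  induction m generalizing k with
  | zero => rw [whitney, if_neg (by omega)]
  | succ m ih =>
    rw [whitney, if_neg (by omega), if_neg (by omega), ih (by omega), ih (by omega)]
    ring

lemma whitney_self (c : ℝ) (m : ℕ) : whitney c m m = 1 := by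
  cases m with
  | zero => simp [whitney]
  | succ m => rw [whitney, if_neg (by omega), if_pos rfl]

lemma whitney_zero_right (c : ℝ) (m : ℕ) : whitney c m 0 = c ^ m := by
  cases m with
  | zero => simp [whitney]
  | succ m => rw [whitney, if_pos rfl]

lemma whitney_succ (c : ℝ) (m : ℕ) {k : ℕ} (hk : k ≠ 0) :
    whitney c (m + 1) k = ((k : ℝ) + c) * whitney c m k + whitney c m (k - 1) := by
  rcases lt_trichotomy k (m + 1) with h | rfl | h
  · rw [whitney, if_neg hk, if_neg h.ne]
  · rw [whitney_self, whitney_eq_zero_of_lt c (Nat.lt_succ_self m), Nat.add_sub_cancel,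
      whitney_self]
    ring
  · rw [whitney_eq_zero_of_lt c h, whitney_eq_zero_of_lt c (by omega : m < k),
      whitney_eq_zero_of_lt c (by omega : m < k - 1)]
    ring

lemma sum_whitney_succ_mul (c : ℝ) (m : ℕ) (u : ℕ → ℝ) :
    ∑ k ∈ range (m + 2), whitney c (m + 1) k * u k =
      ∑ k ∈ range (m + 1), whitney c m k * (((k : ℝ) + c) * u k + u (k + 1)) := by
  have hshift : ∑ k ∈ range (m + 1), whitney c m (k + 1) * (((k + 1 : ℕ) + c) * u (k + 1)) =
      ∑ k ∈ range (m + 1), whitney c m k * (((k : ℝ) + c) * u k) - c ^ m * (c * u 0) := by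
    have h := sum_range_succ' (fun k => whitney c m k * (((k : ℝ) + c) * u k)) (m + 1)
    rw [sum_range_succ, whitney_eq_zero_of_lt c (Nat.lt_succ_self m), whitney_zero_right] at h
    simp only [Nat.cast_zero, zero_add, zero_mul, add_zero] at h
    linarith
  have hstep : ∀ k : ℕ, whitney c (m + 1) (k + 1) * u (k + 1) =
      whitney c m (k + 1) * (((k + 1 : ℕ) + c) * u (k + 1)) + whitney c m k * u (k + 1) := by
    intro k
    rw [whitney_succ c m (by omega : k + 1 ≠ 0), Nat.add_sub_cancel]
    ring
  rw [sum_range_succ', whitney_zero_right, sum_congr rfl fun k _ => hstep k, sum_add_distrib,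
    hshift]
  simp only [mul_add, sum_add_distrib, pow_succ]
  ring

lemma fracD_congr_of_eqOn (c : ℝ) {f g : ℝ → ℝ} {U : Set ℝ} (hU : IsOpen U) (h : EqOn f g U) :
    EqOn (fracD c f) (fracD c g) U := fun z hz => by
  simp only [fracD, h hz, (h.eventuallyEq_of_mem (hU.mem_nhds hz)).deriv_eq]

lemma fracD_sum_mul {ι : Type*} (c : ℝ) (s : Finset ι) (b : ι → ℝ) {f : ι → ℝ → ℝ} {z : ℝ}
    (hf : ∀ i ∈ s, DifferentiableAt ℝ (f i) z) :
    fracD c (fun w => ∑ i ∈ s, b i * f i w) z = ∑ i ∈ s, b i * fracD c (f i) z := by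
  have hd : HasDerivAt (fun w => ∑ i ∈ s, b i * f i w) (∑ i ∈ s, b i * deriv (f i) z) z :=
    HasDerivAt.fun_sum fun i hi => ((hf i hi).hasDerivAt).const_mul (b i)
  simp only [fracD, hd.deriv, mul_sum, ← sum_add_distrib]
  exact sum_congr rfl fun i _ => by ring

noncomputable def descPochhammerTerm (s : ℝ) (k : ℕ) (z : ℝ) : ℝ :=
  (descPochhammer ℝ k).eval s * z ^ k * (1 + z) ^ (s - k)

lemma hasDerivAt_descPochhammerTerm (s : ℝ) (k : ℕ) {z : ℝ} (hz : -1 < z) :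
    HasDerivAt (descPochhammerTerm s k)
      ((descPochhammer ℝ k).eval s *
        (k * z ^ (k - 1) * (1 + z) ^ (s - k) +
          z ^ k * (1 * (s - k) * (1 + z) ^ (s - k - 1)))) z := by
  have hpow : HasDerivAt (fun w : ℝ => (1 + w) ^ (s - k))
      (1 * (s - k) * (1 + z) ^ (s - k - 1)) z :=
    ((hasDerivAt_id z).const_add 1).rpow_const (Or.inl (show (0 : ℝ) < 1 + z by linarith).ne')
  have hterm : descPochhammerTerm s k =
      fun w => (descPochhammer ℝ k).eval s * (w ^ k * (1 + w) ^ (s - k)) := by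
    funext w
    rw [descPochhammerTerm, mul_assoc]
  rw [hterm]
  exact ((hasDerivAt_pow k z).mul hpow).const_mul _

lemma fracD_descPochhammerTerm (c s : ℝ) (k : ℕ) {z : ℝ} (hz : -1 < z) :
    fracD c (descPochhammerTerm s k) z =
      ((k : ℝ) + c) * descPochhammerTerm s k z + descPochhammerTerm s (k + 1) z := by
  have hzk : z * ((k : ℝ) * z ^ (k - 1)) = k * z ^ k := by
    cases k with
    | zero => simp
    | succ j => rw [Nat.add_sub_cancel, pow_succ]; ring
  have hexp : s - ((k + 1 : ℕ) : ℝ) = s - k - 1 := by push_cast; ring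
  rw [fracD, (hasDerivAt_descPochhammerTerm s k hz).deriv]
  simp only [descPochhammerTerm, descPochhammer_succ_eval, hexp, pow_succ]
  linear_combination (descPochhammer ℝ k).eval s * (1 + z) ^ (s - k) * hzk

noncomputable def whitneySum (c s : ℝ) (m : ℕ) (z : ℝ) : ℝ :=
  ∑ k ∈ range (m + 1), whitney c m k * descPochhammerTerm s k z

lemma fracD_whitneySum (c s : ℝ) (m : ℕ) {z : ℝ} (hz : -1 < z) :
    fracD c (whitneySum c s m) z = whitneySum c s (m + 1) z := by
  have hdiff : ∀ k ∈ range (m + 1), DifferentiableAt ℝ (descPochhammerTerm s k) z :=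
    fun k _ => (hasDerivAt_descPochhammerTerm s k hz).differentiableAt
  unfold whitneySum
  rw [fracD_sum_mul c _ _ hdiff, sum_whitney_succ_mul]
  exact sum_congr rfl fun k _ => by rw [fracD_descPochhammerTerm c s k hz]

lemma iterate_fracD_rpow_eqOn (c s : ℝ) (m : ℕ) :
    EqOn ((fracD c)^[m] fun w => (1 + w) ^ s) (whitneySum c s m) (Ioi (-1)) := by
  induction m with
  | zero => intro z _; simp [whitneySum, descPochhammerTerm, whitney]
  | succ m ih =>
    intro z hz
    rw [Function.iterate_succ_apply', fracD_congr_of_eqOn c isOpen_Ioi ih hz]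
    exact fracD_whitneySum c s m hz

theorem fracD_iterate_rpow_general (α : ℝ) (n : ℕ) (c : ℝ)
    (m : ℕ) (z : ℝ) (hz : -1 < z) :
    (fracD c)^[m] (fun w : ℝ => (1 + w) ^ (α * (n : ℝ))) z =
      ∑ k ∈ Finset.range (m + 1),
        whitney c m k * (descPochhammer ℝ k).eval (α * (n : ℝ)) * z ^ k *
          (1 + z) ^ (α * (n : ℝ) - (k : ℝ)) := by
  rw [iterate_fracD_rpow_eqOn c _ m hz]
  simp only [whitneySum, descPochhammerTerm, mul_assoc]

/-- Explicit representation of `h_c^{(m)} = 𝒟_c^m ((1+z)^{αn})` via the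
`c`-Whitney numbers of the second kind and falling factorials, for real `z > -1`. -/
theorem fracD_iterate_rpow (α : ℝ) (hα : 0 < α) (n : ℕ) (hn : 0 < n) (c : ℝ)
    (m : ℕ) (z : ℝ) (hz : -1 < z) :
    (fracD c)^[m] (fun w : ℝ => (1 + w) ^ (α * (n : ℝ))) z =
      ∑ k ∈ Finset.range (m + 1),
        whitney c m k * (descPochhammer ℝ k).eval (α * (n : ℝ)) * z ^ k *
          (1 + z) ^ (α * (n : ℝ) - (k : ℝ)) :=
  fracD_iterate_rpow_general α n c m z hz
end

section
/- Let d ≥ 2, α ∈ (0,1], n ∈ ℕ, and x₁, …, x_d ≥ 0. Then α^d · ∑ over all (j₁,…,j_d) ∈ ℕ₀^d with j₁+⋯+j_d = n of [Γ(αn+1)/(Γ(αj₁+1)⋯Γ(αj_d+1))] · x₁^{αj₁} ⋯ x_d^{αj_d} ≤ (x₁+⋯+x_d)^{αn}. -/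
/-!
Induct on the number of variables, splitting off `x₀`. The Gamma coefficient factors as
`Γ(αn+1) / (Γ(αk+1) Γ(α(n-k)+1))` times the `(d-1)`-variable coefficient at `n - k`, so after
multiplying by `α^(d-1)` the inner sum over the remaining indices is, by induction, at most
`(x₁ + ⋯ + x_{d-1})^(α(n-k))`. The two-variable inequality with `x = x₀` and
`y = x₁ + ⋯ + x_{d-1}` then absorbs the last factor `α`.
-/

open Finset Real

lemma filter_piFinset_range_sum_eq_antidiagonalTuple (d n : ℕ) :
    {j ∈ Fintype.piFinset fun _ : Fin d => range (n + 1) | ∑ i, j i = n} =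
      Nat.antidiagonalTuple d n := by
  ext j
  simp only [mem_filter, Fintype.mem_piFinset, mem_range, Nat.mem_antidiagonalTuple,
    Nat.lt_succ_iff, and_iff_right_iff_imp]
  rintro rfl i
  exact single_le_sum (fun _ _ => Nat.zero_le _) (mem_univ i)

lemma sum_antidiagonalTuple_succ {M : Type*} [AddCommMonoid M] (d n : ℕ)
    (f : (Fin (d + 1) → ℕ) → M) :
    ∑ j ∈ Nat.antidiagonalTuple (d + 1) n, f j =
      ∑ p ∈ antidiagonal n, ∑ j ∈ Nat.antidiagonalTuple d p.2, f (Fin.cons p.1 j) := by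
  rw [sum_sigma']
  symm
  refine sum_nbij' (fun p : (_ : ℕ × ℕ) × (Fin d → ℕ) => Fin.cons p.1.1 p.2)
    (fun j : Fin (d + 1) → ℕ => ⟨(j 0, ∑ i, Fin.tail j i), Fin.tail j⟩) ?_ ?_ ?_ ?_ fun _ _ => rfl
  · rintro ⟨⟨k, m⟩, j⟩ hp
    simp_all [Nat.mem_antidiagonalTuple, Fin.sum_univ_succ]
  · intro j hj
    simpa [Nat.mem_antidiagonalTuple, Fin.sum_univ_succ, Fin.tail] using hj
  · rintro ⟨⟨k, m⟩, j⟩ hp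
    simp_all [Nat.mem_antidiagonalTuple]
  · simp

noncomputable def gammaMultinomialSum (α : ℝ) {d : ℕ} (n : ℕ) (x : Fin d → ℝ) : ℝ :=
  ∑ j ∈ Nat.antidiagonalTuple d n,
    (Gamma (α * n + 1) / ∏ i, Gamma (α * (j i : ℝ) + 1)) * ∏ i, x i ^ (α * (j i : ℝ))

lemma gamma_add_one_pos {t : ℝ} (ht : 0 ≤ t) : 0 < Gamma (t + 1) :=
  Gamma_pos_of_pos (by linarith)

lemma gammaMultinomialSum_succ {α : ℝ} (hα : 0 ≤ α) {d : ℕ} (n : ℕ) (x : Fin (d + 1) → ℝ) :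
    gammaMultinomialSum α n x = ∑ k ∈ range (n + 1),
      Gamma (α * n + 1) / (Gamma (α * k + 1) * Gamma (α * ((n : ℝ) - k) + 1)) *
        x 0 ^ (α * k) * gammaMultinomialSum α (n - k) (Fin.tail x) := by
  rw [gammaMultinomialSum, sum_antidiagonalTuple_succ, Nat.sum_antidiagonal_eq_sum_range_succ_mk]
  refine sum_congr rfl fun k hk => ?_
  have hkn : (k : ℝ) ≤ n := by exact_mod_cast Nat.lt_succ_iff.1 (mem_range.1 hk)
  rw [gammaMultinomialSum, mul_sum, Nat.cast_sub (by exact_mod_cast hkn)]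
  refine sum_congr rfl fun j _ => ?_
  have hk : Gamma (α * k + 1) ≠ 0 := (gamma_add_one_pos (by positivity)).ne'
  have hnk : Gamma (α * ((n : ℝ) - k) + 1) ≠ 0 :=
    (gamma_add_one_pos (mul_nonneg hα (sub_nonneg.2 hkn))).ne'
  have hj : ∏ i, Gamma (α * (j i : ℝ) + 1) ≠ 0 :=
    prod_ne_zero_iff.2 fun i _ => (gamma_add_one_pos (by positivity)).ne'
  simp only [Fin.prod_univ_succ, Fin.cons_zero, Fin.cons_succ, Fin.tail]
  field_simp

def NeoClassicalInequality (α : ℝ) : Prop :=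
  ∀ (n : ℕ) (x y : ℝ), 0 ≤ x → 0 ≤ y →
    α * ∑ j ∈ range (n + 1),
      (Gamma (α * n + 1) / (Gamma (α * j + 1) * Gamma (α * ((n : ℝ) - (j : ℝ)) + 1))) *
        x ^ (α * (j : ℝ)) * y ^ (α * ((n : ℝ) - (j : ℝ)))
      ≤ (x + y) ^ (α * (n : ℝ))

theorem pow_mul_gammaMultinomialSum_le {α : ℝ} (hα : 0 ≤ α) (hneo : NeoClassicalInequality α)
    {d : ℕ} (n : ℕ) (x : Fin d → ℝ) (hx : ∀ i, 0 ≤ x i) :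
    α ^ d * gammaMultinomialSum α n x ≤ (∑ i, x i) ^ (α * n) := by
  induction d generalizing n with
  | zero => cases n <;> simp [gammaMultinomialSum, rpow_nonneg]
  | succ d ih =>
    have hy : 0 ≤ ∑ i : Fin d, x i.succ := sum_nonneg fun i _ => hx _
    rw [Fin.sum_univ_succ, gammaMultinomialSum_succ hα, pow_succ', mul_assoc, mul_sum]
    refine (mul_le_mul_of_nonneg_left (sum_le_sum fun k hk => ?_) hα).trans
      (hneo n (x 0) _ (hx 0) hy)
    have hkn : k ≤ n := Nat.lt_succ_iff.1 (mem_range.1 hk)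
    have hcoeff : 0 ≤ Gamma (α * n + 1) / (Gamma (α * k + 1) * Gamma (α * ((n : ℝ) - k) + 1)) *
        x 0 ^ (α * k) := by
      have := gamma_add_one_pos (mul_nonneg hα (sub_nonneg.2 (Nat.cast_le.2 hkn)))
      have := hx 0
      positivity
    rw [mul_left_comm]
    refine mul_le_mul_of_nonneg_left ?_ hcoeff
    simpa [Nat.cast_sub hkn, Fin.tail] using ih (n - k) (Fin.tail x) fun i => hx _

theorem multivariate_neo_classical_general (d : ℕ)
    (α : ℝ) (hα0 : 0 < α)
    (hneo : ∀ (n : ℕ) (x y : ℝ), 0 ≤ x → 0 ≤ y →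
      α * ∑ j ∈ Finset.range (n + 1),
        (Real.Gamma (α * n + 1) /
          (Real.Gamma (α * j + 1) * Real.Gamma (α * ((n : ℝ) - (j : ℝ)) + 1))) *
          x ^ (α * (j : ℝ)) * y ^ (α * ((n : ℝ) - (j : ℝ)))
        ≤ (x + y) ^ (α * (n : ℝ)))
    (n : ℕ) (x : Fin d → ℝ) (hx : ∀ i, 0 ≤ x i) :
    α ^ d * ∑ j ∈ (Fintype.piFinset fun _ : Fin d => Finset.range (n + 1)).filter
        (fun j => ∑ i, j i = n),
      (Real.Gamma (α * n + 1) / ∏ i, Real.Gamma (α * (j i : ℝ) + 1)) *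
        ∏ i, (x i) ^ (α * (j i : ℝ))
      ≤ (∑ i, x i) ^ (α * (n : ℝ)) := by
  rw [filter_piFinset_range_sum_eq_antidiagonalTuple]
  exact pow_mul_gammaMultinomialSum_le hα0.le hneo n x hx

/-- Multivariate neo-classical inequality for `α ∈ (0,1]`, assuming the
two-variable neo-classical inequality as a hypothesis. -/
theorem multivariate_neo_classical (d : ℕ) (hd : 2 ≤ d)
    (α : ℝ) (hα0 : 0 < α) (hα1 : α ≤ 1)
    (hneo : ∀ (n : ℕ) (x y : ℝ), 0 ≤ x → 0 ≤ y →
      α * ∑ j ∈ Finset.range (n + 1),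
        (Real.Gamma (α * n + 1) /
          (Real.Gamma (α * j + 1) * Real.Gamma (α * ((n : ℝ) - (j : ℝ)) + 1))) *
          x ^ (α * (j : ℝ)) * y ^ (α * ((n : ℝ) - (j : ℝ)))
        ≤ (x + y) ^ (α * (n : ℝ)))
    (n : ℕ) (x : Fin d → ℝ) (hx : ∀ i, 0 ≤ x i) :
    α ^ d * ∑ j ∈ (Fintype.piFinset fun _ : Fin d => Finset.range (n + 1)).filter
        (fun j => ∑ i, j i = n),
      (Real.Gamma (α * n + 1) / ∏ i, Real.Gamma (α * (j i : ℝ) + 1)) *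
        ∏ i, (x i) ^ (α * (j i : ℝ))
      ≤ (∑ i, x i) ^ (α * (n : ℝ)) :=
  multivariate_neo_classical_general d α hα0 hneo n x hx
end

section
/- Let α > 0, λ > 0, and let S be a random variable with the α-fractional Poisson distribution ν_{α,λ}({j}) = λ^{αj}/(Γ(αj+1)·E_α(λ^α)) on ℕ₀. Then E[S] = λ^α · E_{α,α}(λ^α) / (α · E_α(λ^α)), where E_{α,β}(z) = ∑_{j≥0} z^j/Γ(αj+β). -/
lemma frac_poisson_shift (α x : ℝ) (hα : 0 < α) :
    (∑' j : ℕ, (j : ℝ) * x ^ j / Real.Gamma (α * (j : ℝ) + 1))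
      = x / α * ∑' i : ℕ, x ^ i / Real.Gamma (α * (i : ℝ) + α) := by
  have hshift : (∑' i : ℕ, ((i + 1 : ℕ) : ℝ) * x ^ (i + 1) /
        Real.Gamma (α * ((i + 1 : ℕ) : ℝ) + 1))
      = ∑' j : ℕ, (j : ℝ) * x ^ j / Real.Gamma (α * (j : ℝ) + 1) := by
    apply Function.Injective.tsum_eq
      (f := fun j : ℕ => (j : ℝ) * x ^ j / Real.Gamma (α * (j : ℝ) + 1))
      (g := fun i : ℕ => i + 1) (add_left_injective 1)
    intro j hj
    have hj0 : j ≠ 0 := by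
      intro h
      apply hj
      simp [h]
    exact ⟨j - 1, by simp; omega⟩
  rw [← hshift, ← tsum_mul_left]
  refine tsum_congr fun i => ?_
  have h1 : α * ((i : ℝ) + 1) ≠ 0 := by positivity
  have h2 : Real.Gamma (α * (i : ℝ) + α) ≠ 0 :=
    (Real.Gamma_pos_of_pos (by positivity)).ne'
  have hΓ : Real.Gamma (α * ((i + 1 : ℕ) : ℝ) + 1)
      = α * ((i : ℝ) + 1) * Real.Gamma (α * (i : ℝ) + α) := by
    push_cast
    rw [Real.Gamma_add_one h1]
    ring_nf
  rw [hΓ]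
  push_cast
  field_simp
  ring

/-- Mean of the `α`-fractional Poisson distribution:
`E[S] = λ^α E_{α,α}(λ^α) / (α E_α(λ^α))`. -/
theorem fractionalPoisson_mean (α lam : ℝ) (hα : 0 < α) (hlam : 0 < lam) :
    ∑' j : ℕ, (j : ℝ) * (lam ^ (α * (j : ℝ)) /
        (Real.Gamma (α * (j : ℝ) + 1) *
          ∑' i : ℕ, lam ^ (α * (i : ℝ)) / Real.Gamma (α * (i : ℝ) + 1))) =
      lam ^ α * (∑' i : ℕ, (lam ^ α) ^ i / Real.Gamma (α * (i : ℝ) + α)) /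
        (α * ∑' i : ℕ, (lam ^ α) ^ i / Real.Gamma (α * (i : ℝ) + 1)) := by
  set x := lam ^ α with hxdef
  have hx : ∀ j : ℕ, lam ^ (α * (j : ℝ)) = x ^ j := fun j => by
    rw [hxdef, ← Real.rpow_natCast (lam ^ α) j, ← Real.rpow_mul hlam.le]
  have hD : (∑' i : ℕ, lam ^ (α * (i : ℝ)) / Real.Gamma (α * (i : ℝ) + 1))
      = ∑' i : ℕ, x ^ i / Real.Gamma (α * (i : ℝ) + 1) :=
    tsum_congr fun i => by rw [hx]
  rw [hD]
  set D := ∑' i : ℕ, x ^ i / Real.Gamma (α * (i : ℝ) + 1) with hDdef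
  have hL : (∑' j : ℕ, (j : ℝ) * (x ^ j / (Real.Gamma (α * (j : ℝ) + 1) * D)))
      = (∑' j : ℕ, (j : ℝ) * x ^ j / Real.Gamma (α * (j : ℝ) + 1)) / D := by
    rw [← tsum_div_const]
    exact tsum_congr fun j => by ring
  calc ∑' j : ℕ, (j : ℝ) * (lam ^ (α * (j : ℝ)) / (Real.Gamma (α * (j : ℝ) + 1) * D))
      = ∑' j : ℕ, (j : ℝ) * (x ^ j / (Real.Gamma (α * (j : ℝ) + 1) * D)) :=
        tsum_congr fun j => by rw [hx]
    _ = (∑' j : ℕ, (j : ℝ) * x ^ j / Real.Gamma (α * (j : ℝ) + 1)) / D := hL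
    _ = (x / α * ∑' i : ℕ, x ^ i / Real.Gamma (α * (i : ℝ) + α)) / D := by
        rw [frac_poisson_shift α x hα]
    _ = x * (∑' i : ℕ, x ^ i / Real.Gamma (α * (i : ℝ) + α)) / (α * D) := by
        ring
end
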